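/- With the data and axioms of a Courant-algebroid-type structure as in the context, and J : E → E an ℝ-linear map that is anti-self-adjoint for the pairing (⟨Ja,b⟩ = −⟨a,Jb⟩ for all a,b ∈ E) and integrable, i.e. [Ja,Jb] − [a,b] − J([Ja,b] + [a,Jb]) = 0 for all a,b ∈ E, the bracket {f,g} := 2⟨J(Df), Dg⟩ on A is skew-symmetric and satisfies the Jacobi identity: {f,{g,h}} + {g,{h,f}} + {h,{f,g}} = 0 for all f,g,h ∈ A. -/
import Mathlib


/-- The bracket `{f,g} = 2⟨J(Df), Dg⟩` associated to `J` on a Courant-algebroid-type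
structure. -/
noncomputable def poissonBracket {A E : Type*} [CommRing A] [Algebra ℝ A]
    [AddCommGroup E] [Module ℝ E]
    (ip : E →ₗ[ℝ] E →ₗ[ℝ] A) (J : E →ₗ[ℝ] E) (D : A →ₗ[ℝ] E) (f g : A) : A :=
  (2 : ℝ) • ip (J (D f)) (D g)

/-- For a Courant-algebroid-type structure `(E, ⟨·,·⟩, [·,·], ρ, D)` over a commutative
`ℝ`-algebra `A`, and `J : E → E` anti-self-adjoint and integrable, the bracket
`{f,g} = 2⟨J(Df), Dg⟩` is skew-symmetric and satisfies the Jacobi identity. -/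
theorem stmt_6 {A E : Type*} [CommRing A] [Algebra ℝ A]
    [AddCommGroup E] [Module ℝ E] [Module A E] [IsScalarTower ℝ A E]
    (ip : E →ₗ[ℝ] E →ₗ[ℝ] A)
    (hip_symm : ∀ a b : E, ip a b = ip b a)
    (br : E →ₗ[ℝ] E →ₗ[ℝ] E)
    (hbr_skew : ∀ a b : E, br a b = - br b a)
    (ρ : E → Derivation ℝ A A)
    (D : A →ₗ[ℝ] E)
    (c1 : ∀ (f : A) (a : E), ip (D f) a = (1 / 2 : ℝ) • ρ a f)
    (c2 : ∀ (a b : E) (f : A), ρ (br a b) f = ρ a (ρ b f) - ρ b (ρ a f))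
    (c5 : ∀ f g : A, ρ (D f) g = 0)
    (c6 : ∀ a b c : E, ρ a (ip b c)
        = ip (br a b + D (ip a b)) c + ip b (br a c + D (ip a c)))
    (c7 : ∀ (f : A) (a : E), br (D f) a + D (ip (D f) a) = 0)
    (J : E →ₗ[ℝ] E)
    (hJanti : ∀ a b : E, ip (J a) b = - ip a (J b))
    (hJint : ∀ a b : E, br (J a) (J b) - br a b - J (br (J a) b + br a (J b)) = 0) :
    (∀ f g : A, poissonBracket ip J D f g = - poissonBracket ip J D g f) ∧
    (∀ f g h : A,
      poissonBracket ip J D f (poissonBracket ip J D g h)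
        + poissonBracket ip J D g (poissonBracket ip J D h f)
        + poissonBracket ip J D h (poissonBracket ip J D f g) = 0) := by
  have key : ∀ f g : A, poissonBracket ip J D f g = ρ (J (D f)) g := by
    intro f g
    unfold poissonBracket
    rw [hip_symm, c1, smul_smul]
    norm_num
  have skew : ∀ f g : A, poissonBracket ip J D f g = - poissonBracket ip J D g f := by
    intro f g
    unfold poissonBracket
    rw [hJanti, hip_symm, smul_neg]
  refine ⟨skew, ?_⟩
  intro f g h
  have hDD : ∀ u v : A, (ip (D u)) (D v) = 0 := by
    intro u v; rw [c1, c5, smul_zero]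
  have hbrJD : ∀ u v : A, br (J (D u)) (D v)
      = (1/2 : ℝ) • D (poissonBracket ip J D u v) := by
    intro u v
    have h1 : br (D v) (J (D u)) = - D (ip (D v) (J (D u))) :=
      eq_neg_of_add_eq_zero_left (c7 v (J (D u)))
    rw [hbr_skew, h1, neg_neg, c1, map_smul, ← key]
  have hbrDJ : ∀ u v : A, br (D u) (J (D v))
      = (1/2 : ℝ) • D (poissonBracket ip J D u v) := by
    intro u v
    have h1 : br (D u) (J (D v)) = - D (ip (D u) (J (D v))) :=
      eq_neg_of_add_eq_zero_left (c7 u (J (D v)))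
    rw [h1, c1, map_smul, ← key, skew v u, map_neg, smul_neg, neg_neg]
  have hbr0 : br (D f) (D g) = 0 := by
    have h1 : br (D f) (D g) = - D (ip (D f) (D g)) :=
      eq_neg_of_add_eq_zero_left (c7 f (D g))
    rw [h1, hDD, map_zero, neg_zero]
  have hint : br (J (D f)) (J (D g)) = J (D (poissonBracket ip J D f g)) := by
    have h := hJint (D f) (D g)
    have h2 : br (J (D f)) (D g) + br (D f) (J (D g))
        = D (poissonBracket ip J D f g) := by
      rw [hbrJD, hbrDJ, ← add_smul]; norm_num
    rw [hbr0, sub_zero, h2, sub_eq_zero] at h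
    exact h
  have e3 : poissonBracket ip J D h (poissonBracket ip J D f g)
      = - (ρ (J (D f)) (ρ (J (D g)) h) - ρ (J (D g)) (ρ (J (D f)) h)) := by
    rw [skew, key, ← hint, c2]
  rw [e3, skew h f]
  simp only [key, map_neg]
  ring
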